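/- arXiv:1310.4402 — 2 statements merged into one kernel-verified Lean document; each statement's English description precedes it below -/
import Mathlib

section
/- For all ξ, η ∈ ℂ and r, s ∈ ℝ, ‖Φ(ξ,η,r) − Φ(ξ,η,s)‖ = |r − s|; in other words, for each fixed (ξ,η) the map r ↦ Φ(ξ,η,r) is a unit-speed (arclength) parametrization of a straight line in ℝ³. -/
open Complex

/-- The map `Φ : ℂ × ℂ × ℝ → ℂ × ℝ ≅ ℝ³` sending the oriented line `(ξ, η)` and `r ∈ ℝ`
to the point of that line at signed distance `r` from its closest point to the origin. -/
noncomputable def Phi (ξ η : ℂ) (r : ℝ) : ℂ × ℝ :=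
  ((2 * (η - (starRingEnd ℂ) η * ξ ^ 2) + 2 * ξ * (1 + (normSq ξ : ℂ)) * (r : ℂ)) /
      (1 + (normSq ξ : ℂ)) ^ 2,
    (((-2) * (η * (starRingEnd ℂ) ξ + (starRingEnd ℂ) η * ξ) +
        (1 - (normSq ξ : ℂ) ^ 2) * (r : ℂ)) / (1 + (normSq ξ : ℂ)) ^ 2).re)

/-! `Φ(ξ, η, ·)` is affine in `r`, with velocity the inverse stereographic projection of `ξ`,
which lies on the unit sphere because `4|ξ|² + (1 - |ξ|²)² = (1 + |ξ|²)²`. -/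

noncomputable def invStereographic (ξ : ℂ) : ℂ × ℝ :=
  (2 * ξ / (1 + (normSq ξ : ℂ)), (1 - normSq ξ) / (1 + normSq ξ))

lemma one_add_normSq_pos (ξ : ℂ) : 0 < 1 + normSq ξ :=
  add_pos_of_pos_of_nonneg one_pos (normSq_nonneg ξ)

lemma sq_norm_invStereographic_fst_add_sq_snd (ξ : ℂ) :
    ‖(invStereographic ξ).1‖ ^ 2 + (invStereographic ξ).2 ^ 2 = 1 := by
  have hpos := one_add_normSq_pos ξ
  have hcast : (1 + (normSq ξ : ℂ)) = ((1 + normSq ξ : ℝ) : ℂ) := by push_cast; rfl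
  rw [invStereographic, hcast, norm_div, norm_mul, Complex.norm_real, Real.norm_of_nonneg hpos.le,
    Complex.norm_two, div_pow, mul_pow, Complex.sq_norm]
  dsimp only
  field_simp
  ring

lemma Phi_sub_Phi (ξ η : ℂ) (r s : ℝ) :
    Phi ξ η r - Phi ξ η s = (r - s) • invStereographic ξ := by
  have hpos := one_add_normSq_pos ξ
  have hne : (1 + (normSq ξ : ℂ)) ≠ 0 := by exact_mod_cast hpos.ne'
  ext
  · simp only [Phi, invStereographic, Prod.fst_sub, Prod.smul_fst, Complex.real_smul]
    field_simp
    push_cast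
    ring
  · simp only [Phi, invStereographic, Prod.snd_sub, Prod.smul_snd, smul_eq_mul, ← Complex.sub_re]
    rw [← sub_div, show (1 + (normSq ξ : ℂ)) ^ 2 = ((1 + normSq ξ) ^ 2 : ℝ) by push_cast; rfl,
      Complex.div_ofReal_re]
    simp only [← ofReal_pow, add_sub_add_left_eq_sub, sub_re, mul_re, one_re, ofReal_re, sub_im,
      ofReal_im, mul_zero, sub_zero]
    field_simp
    ring

/-- `‖Φ(ξ,η,r) − Φ(ξ,η,s)‖ = |r − s|`: for each fixed `(ξ,η)` the map `r ↦ Φ(ξ,η,r)` is a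
unit-speed parametrization of a straight line in `ℝ³ ≅ ℂ × ℝ`, where
`‖(z,x)‖ = √(|z|² + x²)`. -/
theorem stmt2 (ξ η : ℂ) (r s : ℝ) :
    Real.sqrt (‖(Phi ξ η r).1 - (Phi ξ η s).1‖ ^ 2
        + ((Phi ξ η r).2 - (Phi ξ η s).2) ^ 2) = |r - s| := by
  rw [← Prod.fst_sub, ← Prod.snd_sub, Phi_sub_Phi, Prod.smul_fst, Prod.smul_snd, norm_smul,
    smul_eq_mul, mul_pow, mul_pow, Real.norm_eq_abs, sq_abs, ← mul_add,
    sq_norm_invStereographic_fst_add_sq_snd, mul_one, Real.sqrt_sq_eq_abs]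
end

section
/- The translation of ℝ³ taking the origin to (α, b) ∈ ℂ × ℝ acts on oriented-line coordinates by η ↦ η + ½(α − 2bξ − ᾱξ²) and r ↦ r + (αξ̄ + ᾱξ + b(1−|ξ|²))/(1+|ξ|²): precisely, for all ξ, η ∈ ℂ and r ∈ ℝ, Φ(ξ, η + ½(α − 2bξ − ᾱξ²), r + (αξ̄ + ᾱξ + b(1−|ξ|²))/(1+|ξ|²)) = Φ(ξ, η, r) + (α, b). -/
/-!
For fixed direction `ξ`, `Φ ξ` is real-linear in `(η, r)`, so
`Φ(ξ, η + δη, r + δr) = Φ(ξ, η, r) + Φ(ξ, δη, δr)`. The increments `δη, δr` of the statement are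
the coordinates of the point `(α, b)` on the oriented line of direction `ξ` through it, i.e.
`Φ(ξ, δη, δr) = (α, b)`, which is a direct computation using `ξ ξ̄ = |ξ|²`.
-/

open Complex

theorem Phi_add (ξ η₁ η₂ : ℂ) (r₁ r₂ : ℝ) :
    Phi ξ (η₁ + η₂) (r₁ + r₂) = Phi ξ η₁ r₁ + Phi ξ η₂ r₂ := by
  ext <;> simp only [Phi, Prod.fst_add, Prod.snd_add, ← add_re, map_add, ofReal_add]
  · ring
  · congr 1; ring

theorem one_add_normSq_ne_zero (ξ : ℂ) : (1 + (normSq ξ : ℂ)) ≠ 0 := by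
  exact_mod_cast (add_pos_of_pos_of_nonneg one_pos (normSq_nonneg ξ)).ne'

theorem ofReal_re_translationDistance (α : ℂ) (b : ℝ) (ξ : ℂ) :
    (((α * (starRingEnd ℂ) ξ + (starRingEnd ℂ) α * ξ + (b : ℂ) * (1 - (normSq ξ : ℂ))) /
      (1 + (normSq ξ : ℂ))).re : ℂ) =
      (α * (starRingEnd ℂ) ξ + (starRingEnd ℂ) α * ξ + (b : ℂ) * (1 - (normSq ξ : ℂ))) /
      (1 + (normSq ξ : ℂ)) := by
  rw [← conj_eq_iff_re]
  simp only [map_div₀, map_add, map_mul, map_sub, map_one, conj_conj, conj_ofReal]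
  ring

theorem Phi_translation (α : ℂ) (b : ℝ) (ξ : ℂ) :
    Phi ξ ((1 / 2) * (α - 2 * (b : ℂ) * ξ - (starRingEnd ℂ) α * ξ ^ 2))
        ((α * (starRingEnd ℂ) ξ + (starRingEnd ℂ) α * ξ +
            (b : ℂ) * (1 - (normSq ξ : ℂ))) / (1 + (normSq ξ : ℂ))).re = (α, b) := by
  have hD := one_add_normSq_ne_zero ξ
  have hN : (normSq ξ : ℂ) = ξ * (starRingEnd ℂ) ξ := (mul_conj ξ).symm
  simp only [Phi, ofReal_re_translationDistance, map_mul, map_sub, map_div₀, map_one,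
    map_ofNat, map_pow, conj_conj, conj_ofReal, Prod.mk.injEq]
  constructor
  · field_simp
    rw [hN]; ring
  · convert ofReal_re b using 2
    field_simp
    rw [hN]; ring

/-- The translation of `ℝ³` taking the origin to `(α, b) ∈ ℂ × ℝ` acts on oriented-line
coordinates by `η ↦ η + ½(α − 2bξ − ᾱξ²)` and
`r ↦ r + (αξ̄ + ᾱξ + b(1−|ξ|²))/(1+|ξ|²)`. -/
theorem stmt3 (α : ℂ) (b : ℝ) (ξ η : ℂ) (r : ℝ) :
    Phi ξ (η + (1 / 2) * (α - 2 * (b : ℂ) * ξ - (starRingEnd ℂ) α * ξ ^ 2))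
        (r + ((α * (starRingEnd ℂ) ξ + (starRingEnd ℂ) α * ξ +
            (b : ℂ) * (1 - (normSq ξ : ℂ))) / (1 + (normSq ξ : ℂ))).re)
      = ((Phi ξ η r).1 + α, (Phi ξ η r).2 + b) := by
  rw [Phi_add, Phi_translation]
  rfl
end
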